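/- With κ₁ = 0 and κ₂ > 0, det(J_in) = 0 at a positive amplitude r if and only if σ r²(r_m² − r²) = 2κ₂; for 0 < κ₂ < σ r_m⁴/8 there are exactly two such positive roots, and the larger root r_in satisfies r_in = r_m(1 − κ₂/(σ r_m⁴)) + O(κ₂²) as κ₂ → 0. -/
import Mathlib

set_option maxHeartbeats 800000

private lemma sqrt_eq_of_sq (a b : ℝ) (ha : 0 ≤ a) (hb : 0 < b) (h : a ^ 2 = b ^ 2) :
    a = b := by
  have h0 : (a - b) * (a + b) = 0 := by nlinarith
  rcases mul_eq_zero.mp h0 with h' | h' <;> linarith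

/-- Determinant of the inphase transverse Jacobian block. -/
def detJin (u σ rm κ₁ κ₂ r : ℝ) : ℝ :=
  -2 * (u + 6 * r ^ 2 - 5 * r ^ 4) * κ₁ - 2 * σ * r ^ 2 * (rm ^ 2 - r ^ 2) * κ₂
    + 2 * κ₁ ^ 2 + 4 * κ₂ ^ 2

theorem stmt_11 (σ rm : ℝ) (hσ : 0 < σ) (hrm : 0 < rm) :
    (∀ u κ₂ r : ℝ, 0 < κ₂ → 0 < r →
      (detJin u σ rm 0 κ₂ r = 0 ↔ σ * r ^ 2 * (rm ^ 2 - r ^ 2) = 2 * κ₂)) ∧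
    (∀ κ₂ : ℝ, 0 < κ₂ → κ₂ < σ * rm ^ 4 / 8 →
      ∃ ra rb : ℝ, 0 < ra ∧ ra < rb ∧
        ∀ r : ℝ, 0 < r →
          (σ * r ^ 2 * (rm ^ 2 - r ^ 2) = 2 * κ₂ ↔ (r = ra ∨ r = rb))) ∧
    (∃ C ε : ℝ, 0 < C ∧ 0 < ε ∧
      ∀ κ₂ rin : ℝ, 0 < κ₂ → κ₂ < ε → 0 < rin →
        σ * rin ^ 2 * (rm ^ 2 - rin ^ 2) = 2 * κ₂ → rm ^ 2 / 2 ≤ rin ^ 2 →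
        |rin - rm * (1 - κ₂ / (σ * rm ^ 4))| ≤ C * κ₂ ^ 2) := by
  refine ⟨?_, ?_, ?_⟩
  · -- Part 1
    intro u κ₂ r hκ hr
    have hfac : detJin u σ rm 0 κ₂ r
        = 2 * κ₂ * (2 * κ₂ - σ * r ^ 2 * (rm ^ 2 - r ^ 2)) := by
      unfold detJin; ring
    constructor
    · intro h
      rw [hfac] at h
      rcases mul_eq_zero.mp h with h' | h' <;> linarith
    · intro h
      rw [hfac, h]; ring
  · -- Part 2
    intro κ₂ hκ hκ'
    have hdpos : (0:ℝ) < rm ^ 4 - 8 * κ₂ / σ := by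
      have : 8 * κ₂ / σ < rm ^ 4 := by
        rw [div_lt_iff₀ hσ]; nlinarith
      linarith
    set s : ℝ := Real.sqrt (rm ^ 4 - 8 * κ₂ / σ) with hs
    have hs2 : s ^ 2 = rm ^ 4 - 8 * κ₂ / σ := Real.sq_sqrt hdpos.le
    have hspos : 0 < s := Real.sqrt_pos.mpr hdpos
    have hslt : s < rm ^ 2 := by
      have h8 : 0 < 8 * κ₂ / σ := by positivity
      nlinarith
    set xm : ℝ := (rm ^ 2 - s) / 2 with hxm
    set xp : ℝ := (rm ^ 2 + s) / 2 with hxp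
    have hxmpos : 0 < xm := by rw [hxm]; linarith
    have hxppos : 0 < xp := by rw [hxp]; positivity
    have hxmlt : xm < xp := by rw [hxm, hxp]; linarith
    refine ⟨Real.sqrt xm, Real.sqrt xp, Real.sqrt_pos.mpr hxmpos,
      Real.sqrt_lt_sqrt hxmpos.le hxmlt, ?_⟩
    intro r hr
    have hra2 : (Real.sqrt xm) ^ 2 = xm := Real.sq_sqrt hxmpos.le
    have hrb2 : (Real.sqrt xp) ^ 2 = xp := Real.sq_sqrt hxppos.le
    have hσs : σ * s ^ 2 = σ * rm ^ 4 - 8 * κ₂ := by rw [hs2]; field_simp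
    have h2 : σ * (xm * xp) = 2 * κ₂ := by
      rw [hxm, hxp]; linear_combination (-(1:ℝ)/4) * hσs
    have hsum : xm + xp = rm ^ 2 := by rw [hxm, hxp]; ring
    have key : σ * r ^ 2 * (rm ^ 2 - r ^ 2) - 2 * κ₂
        = σ * ((r ^ 2 - xm) * (xp - r ^ 2)) := by
      linear_combination h2 - σ * r ^ 2 * hsum
    constructor
    · intro h
      have h0 : (r ^ 2 - xm) * (xp - r ^ 2) = 0 := by
        have : σ * ((r ^ 2 - xm) * (xp - r ^ 2)) = 0 := by linarith [key]
        exact (mul_eq_zero.mp this).resolve_left (ne_of_gt hσ)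
      rcases mul_eq_zero.mp h0 with h' | h'
      · exact Or.inl (sqrt_eq_of_sq r (Real.sqrt xm) hr.le (Real.sqrt_pos.mpr hxmpos)
          (by rw [hra2]; linarith))
      · exact Or.inr (sqrt_eq_of_sq r (Real.sqrt xp) hr.le (Real.sqrt_pos.mpr hxppos)
          (by rw [hrb2]; linarith))
    · rintro (h | h) <;> subst h
      · rw [hra2]; linear_combination h2 - σ * xm * hsum
      · rw [hrb2]; linear_combination h2 - σ * xp * hsum
  · -- Part 3
    refine ⟨23 / (σ ^ 2 * rm ^ 7), σ * rm ^ 4 / 8, by positivity, by positivity, ?_⟩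
    intro κ₂ rin hκ hκε hrin heq hhalf
    have hP : (0:ℝ) < σ * rm ^ 4 := by positivity
    set t : ℝ := κ₂ / (σ * rm ^ 4) with hT
    have hκt : κ₂ = σ * rm ^ 4 * t := by rw [hT]; field_simp
    have htpos : 0 < t := by rw [hT]; positivity
    have ht : t < 1 / 8 := by
      rw [hT, div_lt_div_iff₀ hP (by norm_num)]; linarith
    set r₀ : ℝ := rm * (1 - t) with hr₀
    have hr₀lb : 7 / 8 * rm ≤ r₀ := by rw [hr₀]; nlinarith
    have hr₀ub : r₀ ≤ rm := by rw [hr₀]; nlinarith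
    have hEeq : 2 * κ₂ - σ * r₀ ^ 2 * (rm ^ 2 - r₀ ^ 2)
        = σ * rm ^ 4 * t ^ 2 * (5 - 4 * t + t ^ 2) := by
      rw [hr₀, hκt]; ring
    have keyE : σ * (r₀ - rin) * ((rin + r₀) * (rin ^ 2 + r₀ ^ 2 - rm ^ 2))
        = 2 * κ₂ - σ * r₀ ^ 2 * (rm ^ 2 - r₀ ^ 2) := by
      linear_combination heq
    clear_value t r₀
    have h5 : (0:ℝ) ≤ 5 - 4 * t + t ^ 2 := by nlinarith [sq_nonneg (t - 2)]
    have hElb : 0 ≤ 2 * κ₂ - σ * r₀ ^ 2 * (rm ^ 2 - r₀ ^ 2) := by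
      rw [hEeq]
      have : (0:ℝ) ≤ σ * rm ^ 4 * t ^ 2 := by positivity
      exact mul_nonneg this h5
    have hEub : (2 * κ₂ - σ * r₀ ^ 2 * (rm ^ 2 - r₀ ^ 2)) * (σ * rm ^ 4) ≤ 5 * κ₂ ^ 2 := by
      rw [hEeq, hκt]
      have h4 : (0:ℝ) ≤ 4 * t - t ^ 2 := by nlinarith
      nlinarith [mul_nonneg (mul_nonneg (sq_nonneg (σ * rm ^ 4)) (sq_nonneg t)) h4]
    have hD1 : 7 / 8 * rm ≤ rin + r₀ := by nlinarith
    have hD2 : rm ^ 2 / 4 ≤ rin ^ 2 + r₀ ^ 2 - rm ^ 2 := by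
      nlinarith [mul_le_mul hr₀lb hr₀lb (by positivity) (by linarith : (0:ℝ) ≤ r₀)]
    have hDlb : 7 / 32 * rm ^ 3 ≤ (rin + r₀) * (rin ^ 2 + r₀ ^ 2 - rm ^ 2) := by
      linarith [mul_le_mul hD1 hD2 (by positivity) (by linarith : (0:ℝ) ≤ rin + r₀)]
    have hDpos : 0 < (rin + r₀) * (rin ^ 2 + r₀ ^ 2 - rm ^ 2) :=
      lt_of_lt_of_le (by positivity) hDlb
    have hle : rin ≤ r₀ := by
      by_contra hcon
      push_neg at hcon
      have hneg : σ * (r₀ - rin) * ((rin + r₀) * (rin ^ 2 + r₀ ^ 2 - rm ^ 2)) < 0 :=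
        mul_neg_of_neg_of_pos (by nlinarith) hDpos
      linarith [keyE, hElb]
    have h1 : (r₀ - rin) * (7 / 32 * rm ^ 3)
        ≤ (r₀ - rin) * ((rin + r₀) * (rin ^ 2 + r₀ ^ 2 - rm ^ 2)) :=
      mul_le_mul_of_nonneg_left hDlb (by linarith)
    have hmain : (r₀ - rin) * (7 / 32 * rm ^ 3) * (σ * (σ * rm ^ 4)) ≤ 5 * κ₂ ^ 2 := by
      calc (r₀ - rin) * (7 / 32 * rm ^ 3) * (σ * (σ * rm ^ 4))
          ≤ (r₀ - rin) * ((rin + r₀) * (rin ^ 2 + r₀ ^ 2 - rm ^ 2)) * (σ * (σ * rm ^ 4)) :=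
            mul_le_mul_of_nonneg_right h1 (by positivity)
        _ = (2 * κ₂ - σ * r₀ ^ 2 * (rm ^ 2 - r₀ ^ 2)) * (σ * rm ^ 4) := by
            linear_combination (σ * rm ^ 4) * keyE
        _ ≤ 5 * κ₂ ^ 2 := hEub
    have hfin : r₀ - rin ≤ 23 / (σ ^ 2 * rm ^ 7) * κ₂ ^ 2 := by
      rw [div_mul_eq_mul_div, le_div_iff₀ (by positivity : (0:ℝ) < σ ^ 2 * rm ^ 7)]
      nlinarith [hmain, sq_nonneg κ₂]
    rw [abs_le]
    constructor
    · linarith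
    · have : 0 ≤ 23 / (σ ^ 2 * rm ^ 7) * κ₂ ^ 2 := by positivity
      linarith
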